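/- In circular Nim CN(8,3), if a position p has minima of its two 'squares' at distance 3 apart (normalized so p = (0, x₁, x₂, 0, x₄, x₅, x₆, x₇) after subtracting the square minima), then p belongs to the same outcome class (P or N) as the associated CN(5,2) position (x₁, x₂, x₄, x₅+x₆, x₇); moreover, every CN(8,3) position whose reduced excess vector (x₂,...,x₇) with x₁ = 0 (adjacent minima case) is a P-position of PathNim PN(6,3) also has minima at distance three apart and its associated CN(5,2) position is a P-position of CN(5,2). -/

import Mathlib

/-- A legal move in SetNim: at least one stack strictly decreases, all changed
stacks lie in some allowed move set, stacks weakly decrease. -/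
def Move {V : Type} (A : Set (Set V)) (p q : V → ℕ) : Prop :=
  q ≠ p ∧ (∀ i, q i ≤ p i) ∧ ∃ a ∈ A, ∀ i, q i ≠ p i → i ∈ a

/-- P-positions: positions all of whose options are N-positions. -/
def PPos {V : Type} [Fintype V] (A : Set (Set V)) (p : V → ℕ) : Prop :=
  ∀ q, Move A p q → ¬ PPos A q
termination_by Finset.univ.sum p
decreasing_by
  rename_i hq
  obtain ⟨hne, hle, -⟩ := hq
  refine Finset.sum_lt_sum (fun i _ => hle i) ?_
  obtain ⟨i, hi⟩ := Function.ne_iff.mp hne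
  exact ⟨i, Finset.mem_univ i, lt_of_le_of_ne (hle i) hi⟩

/-- Move sets of circular Nim CN(8,3): three consecutive stacks. -/
def CN83 : Set (Set (Fin 8)) := {s | ∃ i : Fin 8, s = {i, i + 1, i + 2}}

/-- Move sets of circular Nim CN(5,2): two consecutive stacks. -/
def CN52 : Set (Set (Fin 5)) := {s | ∃ i : Fin 5, s = {i, i + 1}}

/-- Move sets of PathNim PN(6,3): three consecutive stacks on a path. -/
def PN63 : Set (Set (Fin 6)) := {{0, 1, 2}, {1, 2, 3}, {2, 3, 4}, {3, 4, 5}}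

/-- The dihedral symmetries of the 8-cycle. -/
def dih8 (k : Fin 8) (s : Bool) : Fin 8 → Fin 8 := fun i => if s then k - i else k + i

/-!
Pushing a position forward along a map `π` of stacks, when the stacks in a set `Z` are empty and
the move sets match up to `Z` in both directions, relates moves of the two games both ways; so it
is a bisimulation and preserves outcome classes. This covers zero- and merge-reduction at once:
part (i) is the instance `π = (·, 0, 1, ·, 2, 3, 3, 4)`, `Z = {0, 3}`. For part (ii), the
P-positions of PN(6,3) are exactly those with a pair of consecutive zeros balancing the sums on
either side, since these form a stable and absorbing set. Such a zero pair and one of `p 0`, `p 1`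
are three apart, and the associated CN(5,2) position has two zeros two apart with the stack
between them equal to the sum of the other two; it pushes forward to two equal Nim heaps.
-/

theorem Finset.exists_le_sum_eq_of_le {ι : Type*} (s : Finset ι) (f : ι → ℕ) {t : ℕ}
    (ht : t ≤ ∑ i ∈ s, f i) : ∃ g ≤ f, ∑ i ∈ s, g i = t := by
  classical
  induction s using Finset.induction_on generalizing t with
  | empty => exact ⟨0, fun _ => Nat.zero_le _, (by simpa using ht : t = 0).symm⟩
  | insert a s ha ih =>
    rw [Finset.sum_insert ha] at ht
    obtain ⟨g, hg, hsum⟩ := ih (min_le_right t (∑ i ∈ s, f i))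
    refine ⟨Function.update g a (t - min t (∑ i ∈ s, f i)), fun i => ?_, ?_⟩
    · rcases eq_or_ne i a with rfl | hi
      · simp only [Function.update_self]; omega
      · simpa [Function.update_of_ne hi] using hg i
    · rw [Finset.sum_insert ha, Function.update_self,
        Finset.sum_congr rfl fun i hi => Function.update_of_ne (ne_of_mem_of_not_mem hi ha) _ g,
        hsum]
      omega

section SetNim

variable {V W : Type} {A : Set (Set V)} {B : Set (Set W)}

theorem Move.of_le {p q : V → ℕ} {a : Set V} (ha : a ∈ A) (hle : q ≤ p) (hne : q ≠ p)
    (hout : ∀ v ∉ a, q v = p v) : Move A p q :=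
  ⟨hne, hle, a, ha, fun v hv => by_contra fun h => hv (hout v h)⟩

variable [Fintype V]

theorem pPos_iff {p : V → ℕ} : PPos A p ↔ ∀ q, Move A p q → ¬ PPos A q := by
  rw [PPos]

theorem Move.sum_lt {p q : V → ℕ} (h : Move A p q) : ∑ v, q v < ∑ v, p v := by
  obtain ⟨hne, hle, -⟩ := h
  obtain ⟨v, hv⟩ := Function.ne_iff.mp hne
  exact Finset.sum_lt_sum (fun v _ => hle v) ⟨v, Finset.mem_univ v, (hle v).lt_of_ne hv⟩

theorem pPos_of_response (S : (V → ℕ) → Prop)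
    (hS : ∀ p q, S p → Move A p q → ∃ r, Move A q r ∧ S r) {p : V → ℕ} (hp : S p) :
    PPos A p := by
  induction h : ∑ v, p v using Nat.strong_induction_on generalizing p with
  | _ n ih =>
    refine pPos_iff.mpr fun q hpq hq => ?_
    obtain ⟨r, hqr, hr⟩ := hS p q hp hpq
    exact pPos_iff.mp hq r hqr (ih _ (h ▸ hqr.sum_lt.trans hpq.sum_lt) hr rfl)

theorem pPos_iff_of_stable_of_absorbing (S : (V → ℕ) → Prop)
    (hstable : ∀ p q, S p → Move A p q → ¬ S q)
    (habsorb : ∀ p, ¬ S p → ∃ q, Move A p q ∧ S q) (p : V → ℕ) : PPos A p ↔ S p := by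
  have hP : ∀ p, S p → PPos A p := fun p =>
    pPos_of_response S fun p q hp hpq => habsorb q (hstable p q hp hpq)
  refine ⟨fun h => by_contra fun hp => ?_, hP p⟩
  obtain ⟨q, hpq, hq⟩ := habsorb p hp
  exact pPos_iff.mp h q hpq (hP q hq)

theorem pPos_iff_of_bisim [Fintype W] (R : (V → ℕ) → (W → ℕ) → Prop)
    (hfwd : ∀ p q p', R p q → Move A p p' → ∃ q', Move B q q' ∧ R p' q')
    (hbwd : ∀ p q q', R p q → Move B q q' → ∃ p', Move A p p' ∧ R p' q')
    {p : V → ℕ} {q : W → ℕ} (h : R p q) : PPos A p ↔ PPos B q := by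
  induction hn : ∑ v, p v + ∑ w, q w using Nat.strong_induction_on generalizing p q with
  | _ n ih =>
    constructor
    · refine fun hp => pPos_iff.mpr fun q' hqq' hq' => ?_
      obtain ⟨p', hpp', hR⟩ := hbwd p q q' h hqq'
      exact pPos_iff.mp hp p' hpp'
        ((ih _ (hn ▸ Nat.add_lt_add hpp'.sum_lt hqq'.sum_lt) hR rfl).mpr hq')
    · refine fun hq => pPos_iff.mpr fun p' hpp' hp' => ?_
      obtain ⟨q', hqq', hR⟩ := hfwd p q p' h hpp'
      exact pPos_iff.mp hq q' hqq'
        ((ih _ (hn ▸ Nat.add_lt_add hpp'.sum_lt hqq'.sum_lt) hR rfl).mp hp')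

variable [DecidableEq W]

def pushforward (π : V → W) (p : V → ℕ) (w : W) : ℕ := ∑ v with π v = w, p v

theorem exists_le_pushforward_eq (π : V → W) {p : V → ℕ} {q : W → ℕ}
    (hq : q ≤ pushforward π p) :
    ∃ p' ≤ p, pushforward π p' = q ∧ ∀ v, q (π v) = pushforward π p (π v) → p' v = p v := by
  have hfiber : ∀ w, ∃ g ≤ p, ∑ v with π v = w, g v = q w ∧
      (q w = pushforward π p w → g = p) := by
    intro w
    by_cases hw : q w = pushforward π p w
    · exact ⟨p, le_rfl, hw.symm, fun _ => rfl⟩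
    · obtain ⟨g, hg, hsum⟩ := Finset.exists_le_sum_eq_of_le _ p (hq w)
      exact ⟨g, hg, hsum, fun h => absurd h hw⟩
  choose g hg hsum hfix using hfiber
  refine ⟨fun v => g (π v) v, fun v => hg _ v, funext fun w => ?_,
    fun v hv => congrFun (hfix _ hv) v⟩
  rw [← hsum w]
  exact Finset.sum_congr rfl fun v hv => by
    simp only [(Finset.mem_filter.mp hv).2]

theorem Move.pushforward {π : V → W} {Z : Set V}
    (hA : ∀ a ∈ A, ∃ b ∈ B, ∀ v ∈ a, v ∉ Z → π v ∈ b)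
    {p p' : V → ℕ} (hp : ∀ v ∈ Z, p v = 0) (h : Move A p p') :
    Move B (pushforward π p) (pushforward π p') := by
  obtain ⟨hne, hle, a, ha, hch⟩ := h
  obtain ⟨b, hb, hab⟩ := hA a ha
  refine ⟨?_, fun w => Finset.sum_le_sum fun v _ => hle v, b, hb, fun w hw => ?_⟩
  · obtain ⟨v, hv⟩ := Function.ne_iff.mp hne
    refine Function.ne_iff.mpr ⟨π v, (Finset.sum_lt_sum (fun u _ => hle u) ?_).ne⟩
    exact ⟨v, by simp, (hle v).lt_of_ne hv⟩
  · obtain ⟨v, rfl, hv⟩ : ∃ v, π v = w ∧ p' v ≠ p v := by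
      by_contra! h
      exact hw (Finset.sum_congr rfl fun v hv => h v (Finset.mem_filter.mp hv).2)
    exact hab v (hch v hv) fun hZ => hv (le_antisymm (hle v) (hp v hZ ▸ Nat.zero_le _))

theorem pPos_iff_pPos_pushforward [Fintype W] (π : V → W) (Z : Set V)
    (hA : ∀ a ∈ A, ∃ b ∈ B, ∀ v ∈ a, v ∉ Z → π v ∈ b)
    (hB : ∀ b ∈ B, ∃ a ∈ A, ∀ v, π v ∈ b → v ∉ Z → v ∈ a)
    {p : V → ℕ} (hp : ∀ v ∈ Z, p v = 0) : PPos A p ↔ PPos B (pushforward π p) := by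
  refine pPos_iff_of_bisim (fun p q => (∀ v ∈ Z, p v = 0) ∧ q = pushforward π p) ?_ ?_ ⟨hp, rfl⟩
  · rintro p _ p' ⟨hp, rfl⟩ hpp'
    exact ⟨_, hpp'.pushforward hA hp, fun v hv => Nat.le_zero.mp (hp v hv ▸ hpp'.2.1 v), rfl⟩
  · rintro p _ q' ⟨hp, rfl⟩ ⟨hne, hle, b, hb, hch⟩
    obtain ⟨a, ha, hba⟩ := hB b hb
    obtain ⟨p', hp'le, rfl, hfix⟩ := exists_le_pushforward_eq π hle
    refine ⟨p', Move.of_le ha hp'le (fun h => hne (h ▸ rfl)) fun v hv => ?_,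
      fun v hv => Nat.le_zero.mp (hp v hv ▸ hp'le v), rfl⟩
    by_contra hne'
    refine hv (hba v (hch _ fun h => hne' (hfix v h)) fun hZ => hne' ?_)
    exact le_antisymm (hp'le v) (hp v hZ ▸ Nat.zero_le _)

end SetNim

theorem pPos_nim_two_equal (n : ℕ) :
    PPos (Set.range fun i : Fin 2 => ({i} : Set (Fin 2))) ![n, n] := by
  refine pPos_of_response (fun x => x 0 = x 1) ?_ rfl
  rintro x y hx ⟨hne, hle, _, ⟨i, rfl⟩, hch⟩
  have hi : i + 1 ≠ i := by fin_cases i <;> decide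
  have hx' : x (i + 1) = x i := by fin_cases i <;> simp [hx]
  have hout : y (i + 1) = x (i + 1) := by_contra fun h => hi (hch _ h)
  have hyi : y i < x i := (hle i).lt_of_ne fun h => hne <| funext fun j => by
    rcases eq_or_ne j i with rfl | hj
    · exact h
    · exact by_contra fun h' => hj (hch j h')
  refine ⟨Function.update y (i + 1) (y i), Move.of_le ⟨i + 1, rfl⟩ (fun j => ?_) ?_ ?_, ?_⟩
  · rcases eq_or_ne j (i + 1) with rfl | hj
    · simp only [Function.update_self]; omega
    · simp [Function.update_of_ne hj]
  · intro h
    have := congrFun h (i + 1)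
    simp only [Function.update_self] at this
    omega
  · intro j hj
    exact Function.update_of_ne hj _ _
  · fin_cases i <;> simp

theorem pPos_cn52_of_eq_add {q : Fin 5 → ℕ} (i : Fin 5) (h0 : q i = 0) (h2 : q (i + 2) = 0)
    (h : q (i + 1) = q (i + 3) + q (i + 4)) : PPos CN52 q := by
  let π : Fin 5 → Fin 2 := fun v => if v = i + 1 then 0 else 1
  have hA : ∀ i j : Fin 5, ∃ k : Fin 2, ∀ v : Fin 5, v = j ∨ v = j + 1 →
      ¬(v = i ∨ v = i + 2) → (if v = i + 1 then 0 else 1) = k := by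
    decide
  have hB : ∀ (i : Fin 5) (k : Fin 2), ∃ j : Fin 5, ∀ v : Fin 5,
      (if v = i + 1 then 0 else 1) = k → ¬(v = i ∨ v = i + 2) → v = j ∨ v = j + 1 := by
    decide
  rw [pPos_iff_pPos_pushforward π {i, i + 2}
    (B := Set.range fun k : Fin 2 => ({k} : Set (Fin 2)))
    (by rintro _ ⟨j, rfl⟩; obtain ⟨k, hk⟩ := hA i j; exact ⟨{k}, ⟨k, rfl⟩, hk⟩)
    (by rintro _ ⟨k, rfl⟩; obtain ⟨j, hj⟩ := hB i k; exact ⟨{j, j + 1}, ⟨j, rfl⟩, hj⟩)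
    (by rintro v (rfl | rfl) <;> assumption)]
  convert pPos_nim_two_equal (q (i + 1)) using 1
  funext k
  fin_cases i <;> fin_cases k <;>
    simp [π, pushforward, Finset.sum_filter, Fin.sum_univ_five] at h0 h2 h ⊢ <;> omega

def HasBalancedZeroPair (y : Fin 6 → ℕ) : Prop :=
  (y 1 = 0 ∧ y 2 = 0 ∧ y 0 = y 3 + y 4 + y 5) ∨
  (y 2 = 0 ∧ y 3 = 0 ∧ y 0 + y 1 = y 4 + y 5) ∨
  (y 3 = 0 ∧ y 4 = 0 ∧ y 0 + y 1 + y 2 = y 5)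

theorem HasBalancedZeroPair.not_of_move {t u : Fin 6 → ℕ} (ht : HasBalancedZeroPair t)
    (h : Move PN63 t u) : ¬ HasBalancedZeroPair u := by
  have hlt := h.sum_lt
  obtain ⟨-, hle, a, ha, hch⟩ := h
  have hout : ∀ v ∉ a, u v = t v := fun v hv => by_contra fun h => hv (hch v h)
  have := hle 0; have := hle 1; have := hle 2; have := hle 3; have := hle 4; have := hle 5
  simp only [Fin.sum_univ_six] at hlt
  unfold HasBalancedZeroPair at ht ⊢
  simp only [PN63, Set.mem_insert_iff, Set.mem_singleton_iff] at ha
  rcases ha with rfl | rfl | rfl | rfl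
  · have := hout 3 (by decide); have := hout 4 (by decide); have := hout 5 (by decide)
    omega
  · have := hout 0 (by decide); have := hout 4 (by decide); have := hout 5 (by decide)
    omega
  · have := hout 0 (by decide); have := hout 1 (by decide); have := hout 5 (by decide)
    omega
  · have := hout 0 (by decide); have := hout 1 (by decide); have := hout 2 (by decide)
    omega

theorem exists_move_hasBalancedZeroPair {y : Fin 6 → ℕ} (hy : ¬ HasBalancedZeroPair y) :
    ∃ u, Move PN63 y u ∧ HasBalancedZeroPair u := by
  suffices ∃ u, ∃ a ∈ PN63, u ≤ y ∧ (∀ v ∉ a, u v = y v) ∧ HasBalancedZeroPair u by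
    obtain ⟨u, a, ha, hle, hout, hu⟩ := this
    exact ⟨u, Move.of_le ha hle (fun h => hy (h ▸ hu)) hout, hu⟩
  unfold HasBalancedZeroPair at hy ⊢
  by_cases h1 : y 3 + y 4 + y 5 ≤ y 0
  · refine ⟨![y 3 + y 4 + y 5, 0, 0, y 3, y 4, y 5], {0, 1, 2}, by simp [PN63],
      fun v => ?_, fun v hv => ?_, ?_⟩ <;> try fin_cases v
    all_goals first | rfl | simp at hv | simp <;> omega
  by_cases h2 : y 0 + y 1 + y 2 ≤ y 5
  · refine ⟨![y 0, y 1, y 2, 0, 0, y 0 + y 1 + y 2], {3, 4, 5}, by simp [PN63],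
      fun v => ?_, fun v hv => ?_, ?_⟩ <;> try fin_cases v
    all_goals first | rfl | simp at hv | simp <;> omega
  by_cases h3 : y 4 + y 5 ≤ y 0 + y 1
  · by_cases h4 : y 0 ≤ y 4 + y 5
    · refine ⟨![y 0, y 4 + y 5 - y 0, 0, 0, y 4, y 5], {1, 2, 3}, by simp [PN63],
        fun v => ?_, fun v hv => ?_, ?_⟩ <;> try fin_cases v
      all_goals first | rfl | simp at hv | simp <;> omega
    · refine ⟨![y 0, 0, 0, y 0 - (y 4 + y 5), y 4, y 5], {1, 2, 3}, by simp [PN63],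
        fun v => ?_, fun v hv => ?_, ?_⟩ <;> try fin_cases v
      all_goals first | rfl | simp at hv | simp <;> omega
  · by_cases h4 : y 5 ≤ y 0 + y 1
    · refine ⟨![y 0, y 1, 0, 0, y 0 + y 1 - y 5, y 5], {2, 3, 4}, by simp [PN63],
        fun v => ?_, fun v hv => ?_, ?_⟩ <;> try fin_cases v
      all_goals first | rfl | simp at hv | simp <;> omega
    · refine ⟨![y 0, y 1, y 5 - (y 0 + y 1), 0, 0, y 5], {2, 3, 4}, by simp [PN63],
        fun v => ?_, fun v hv => ?_, ?_⟩ <;> try fin_cases v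
      all_goals first | rfl | simp at hv | simp <;> omega

theorem pPos_pn63_iff (y : Fin 6 → ℕ) : PPos PN63 y ↔ HasBalancedZeroPair y :=
  pPos_iff_of_stable_of_absorbing _ (fun _ _ ht h => ht.not_of_move h)
    (fun _ hy => exists_move_hasBalancedZeroPair hy) y

theorem pPos_cn83_iff_pPos_cn52 {p : Fin 8 → ℕ} (h0 : p 0 = 0) (h3 : p 3 = 0) :
    PPos CN83 p ↔ PPos CN52 ![p 1, p 2, p 4, p 5 + p 6, p 7] := by
  let π : Fin 8 → Fin 5 := ![0, 0, 1, 1, 2, 3, 3, 4]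
  have hA : ∀ i : Fin 8, ∃ j : Fin 5, ∀ v : Fin 8, (v = i ∨ v = i + 1 ∨ v = i + 2) →
      ¬(v = 0 ∨ v = 3) → π v = j ∨ π v = j + 1 := by
    decide
  have hB : ∀ j : Fin 5, ∃ i : Fin 8, ∀ v : Fin 8, (π v = j ∨ π v = j + 1) →
      ¬(v = 0 ∨ v = 3) → v = i ∨ v = i + 1 ∨ v = i + 2 := by
    decide
  rw [pPos_iff_pPos_pushforward π {0, 3} (B := CN52)
    (by rintro _ ⟨i, rfl⟩; obtain ⟨j, hj⟩ := hA i; exact ⟨{j, j + 1}, ⟨j, rfl⟩, hj⟩)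
    (by rintro _ ⟨j, rfl⟩; obtain ⟨i, hi⟩ := hB j; exact ⟨{i, i + 1, i + 2}, ⟨i, rfl⟩, hi⟩)
    (by rintro v (rfl | rfl) <;> assumption)]
  congr! 1
  funext j
  fin_cases j <;> simp [π, pushforward, Finset.sum_filter, Fin.sum_univ_eight, h0, h3]

/-- (i) a CN(8,3) position normalized with square minima 0 at
distance three apart, p = (0,x₁,x₂,0,x₄,x₅,x₆,x₇), has the same outcome class
as the CN(5,2) position (x₁,x₂,x₄,x₅+x₆,x₇); (ii) a position normalized with
adjacent square minima, p = (0,0,x₂,…,x₇), whose excess vector (x₂,…,x₇) is a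
P-position of PN(6,3), also has (up to rotation/reflection) minima at distance
three apart, and its associated CN(5,2) position is a P-position of CN(5,2). -/
theorem cn83_subspace_reductions :
    (∀ p : Fin 8 → ℕ, p 0 = 0 → p 3 = 0 →
      (PPos CN83 p ↔ PPos CN52 ![p 1, p 2, p 4, p 5 + p 6, p 7])) ∧
    (∀ p : Fin 8 → ℕ, p 0 = 0 → p 1 = 0 →
      PPos PN63 ![p 2, p 3, p 4, p 5, p 6, p 7] →
      ∃ (k : Fin 8) (s : Bool),
        p (dih8 k s 0) = 0 ∧ p (dih8 k s 3) = 0 ∧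
        PPos CN52 ![p (dih8 k s 1), p (dih8 k s 2), p (dih8 k s 4),
          p (dih8 k s 5) + p (dih8 k s 6), p (dih8 k s 7)]) := by
  refine ⟨fun p h0 h3 => pPos_cn83_iff_pPos_cn52 h0 h3, fun p h0 h1 hP => ?_⟩
  -- the remaining side conditions hold by unfolding `dih8` and the vector literals
  rcases (pPos_pn63_iff _).mp hP with ⟨h3, h4, h⟩ | ⟨h4, h5, h⟩ | ⟨h5, h6, h⟩
  · exact ⟨0, false, h0, h3, pPos_cn52_of_eq_add 0 h1 h4 h⟩
  · exact ⟨1, false, h1, h4, pPos_cn52_of_eq_add 2 h5 h0 h.symm⟩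
  · exact ⟨5, false, h5, h0, pPos_cn52_of_eq_add 0 h6 h1 h.symm⟩
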